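/- Let V be a finite set, (V,E) a digraph, and Q an acyclic flow on (V,E) with div Q = μ₁ − μ₂ for probability measures μ₁, μ₂ on V. Then there exists a coupling ρ between μ₁ and μ₂ that is compatible with the partial order induced by the acyclic digraph (V,E(Q)); in particular ρ(x,y) > 0 implies x = y or there is a directed path from x to y in (V,E(Q)). -/

import Mathlib

open scoped BigOperators

variable {V : Type*}

/-- A directed path in the digraph `(V, E)`: a nonempty list of vertices whose
consecutive pairs are directed edges. -/
def IsDipath (E : Set (V × V)) (l : List V) : Prop :=
  l ≠ [] ∧ l.Chain' (fun a b => (a, b) ∈ E)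

/-- The list of directed edges of a path. -/
def pathEdges (l : List V) : List (V × V) := l.zip l.tail

/-- The unit flow `Q_γ` along a path: `1` on the edges of the path and `0` elsewhere. -/
noncomputable def pathFlow (l : List V) : V × V → ℝ :=
  Set.indicator {e | e ∈ pathEdges l} 1

/-- A flow on the digraph `(V, E)`: nonnegative and supported on `E`. -/
def IsFlow (E : Set (V × V)) (Q : V × V → ℝ) : Prop :=
  (∀ e, 0 ≤ Q e) ∧ ∀ e, e ∉ E → Q e = 0

/-- The divergence of a flow at a vertex. -/
noncomputable def divergence (Q : V × V → ℝ) (x : V) : ℝ :=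
  (∑' y, Q (x, y)) - ∑' y, Q (y, x)

/-- A relation is acyclic if it has no directed cycles. -/
def AcyclicRel (r : V → V → Prop) : Prop := ∀ x, ¬ Relation.TransGen r x x

/-- The edge relation of a digraph. -/
def edgeRel (E : Set (V × V)) : V → V → Prop := fun a b => (a, b) ∈ E

/-- The partial order induced by an acyclic digraph: `x ≤ y` iff `x = y` or there is
a directed path from `x` to `y`. -/
def inducedLE (E : Set (V × V)) : V → V → Prop :=
  Relation.ReflTransGen (edgeRel E)

/-- A finitely decomposable flow: a pointwise sum `∑ₙ qₙ Q_{γₙ}` over finite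
self-avoiding directed paths with summable nonnegative weights. -/
def FinDecomposable (E : Set (V × V)) (Q : V × V → ℝ) : Prop :=
  ∃ (γ : ℕ → List V) (q : ℕ → ℝ),
    (∀ n, IsDipath E (γ n)) ∧ (∀ n, (γ n).Nodup) ∧ (∀ n, 0 ≤ q n) ∧ Summable q ∧
    ∀ e, Q e = ∑' n, q n * pathFlow (γ n) e

/-- A probability measure on a countable set, as a nonnegative function of total sum `1`. -/
def IsProb (μ : V → ℝ) : Prop := (∀ x, 0 ≤ μ x) ∧ HasSum μ 1

/-- A coupling of `μ₁` and `μ₂`: a probability on `V × V` with the given marginals. -/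
def IsCoupling (μ₁ μ₂ : V → ℝ) (ρ : V × V → ℝ) : Prop :=
  (∀ p, 0 ≤ ρ p) ∧ (∀ x, HasSum (fun y => ρ (x, y)) (μ₁ x)) ∧
    ∀ y, HasSum (fun x => ρ (x, y)) (μ₂ y)

/-- Stochastic domination: `∑ f μ₁ ≤ ∑ f μ₂` for every bounded increasing `f`. -/
def StochDom (le : V → V → Prop) (μ₁ μ₂ : V → ℝ) : Prop :=
  ∀ f : V → ℝ, (∃ C, ∀ x, |f x| ≤ C) → (∀ x y, le x y → f x ≤ f y) →
    ∑' x, f x * μ₁ x ≤ ∑' x, f x * μ₂ x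

/-- Finite-case divergence. -/
noncomputable def divergenceF [Fintype V] (Q : V × V → ℝ) (x : V) : ℝ :=
  (∑ y, Q (x, y)) - ∑ y, Q (y, x)

/-- Probability measure on a finite set. -/
def IsProbF [Fintype V] (μ : V → ℝ) : Prop := (∀ x, 0 ≤ μ x) ∧ ∑ x, μ x = 1

/-- Coupling on a finite set. -/
def IsCouplingF [Fintype V] (μ₁ μ₂ : V → ℝ) (ρ : V × V → ℝ) : Prop :=
  (∀ p, 0 ≤ ρ p) ∧ (∀ x, ∑ y, ρ (x, y) = μ₁ x) ∧ ∀ y, ∑ x, ρ (x, y) = μ₂ y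

/-- Stochastic domination on a finite set. -/
def StochDomF [Fintype V] (le : V → V → Prop) (μ₁ μ₂ : V → ℝ) : Prop :=
  ∀ f : V → ℝ, (∀ x y, le x y → f x ≤ f y) → ∑ x, f x * μ₁ x ≤ ∑ x, f x * μ₂ x

/-- The cost of a path: the sum of the weights of its edges. -/
noncomputable def pathCost (w : V × V → ℝ) (l : List V) : ℝ := ((pathEdges l).map w).sum

/-- The geodesic cost associated to a weight function on a digraph. -/
noncomputable def geoCost (E : Set (V × V)) (w : V × V → ℝ) (x y : V) : ℝ :=
  sInf {r | ∃ l, IsDipath E l ∧ l.head? = some x ∧ l.getLast? = some y ∧ pathCost w l = r}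

/-!
Peel the flow off one edge at a time. Acyclicity gives a source `s` of the support of `Q` and an
edge `(s, v)` in it; as no flow enters `s`, `μ₁ s ≥ Q (s, v)`. Deleting the edge and moving mass
`Q (s, v)` of `μ₁` from `s` to `v` preserves the divergence equation and the nonnegativity of the
marginals, and shrinks the support, so by induction the new pair has a compatible coupling. Sending
the share `Q (s, v)` of its row `v` back to row `s` gives a coupling of the original pair, which is
still compatible because `s → v` is an edge.
-/

open Finset

theorem AcyclicRel.exists_source [Finite V] {r : V → V → Prop} (hr : AcyclicRel r) {a b : V}
    (hab : r a b) : ∃ s v, r s v ∧ ∀ u, ¬ r u s := by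
  have : IsTrans V (Relation.TransGen r) := ⟨fun _ _ _ => .trans⟩
  have : Std.Irrefl (Relation.TransGen r) := ⟨hr⟩
  have hwf : WellFounded r :=
    Subrelation.wf .single (Finite.wellFounded_of_trans_of_irrefl (Relation.TransGen r))
  obtain ⟨s, ⟨v, hsv⟩, hmin⟩ := hwf.has_min {x | ∃ y, r x y} ⟨a, b, hab⟩
  exact ⟨s, v, hsv, fun u hus => hmin u ⟨s, hus⟩ hus⟩

section Finite

variable [Fintype V]

theorem divergenceF_sub (Q R : V × V → ℝ) (x : V) :
    divergenceF (Q - R) x = divergenceF Q x - divergenceF R x := by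
  simp only [divergenceF, Pi.sub_apply, sum_sub_distrib]
  ring

theorem divergenceF_single [DecidableEq V] (s v : V) (q : ℝ) (x : V) :
    divergenceF (Pi.single (s, v) q) x = (Pi.single s q : V → ℝ) x - (Pi.single v q : V → ℝ) x := by
  simp only [divergenceF, Pi.single_apply, Prod.mk.injEq, ite_and, sum_ite_irrel,
    sum_ite_eq', mem_univ, if_true, sum_const_zero]

theorem apply_le_divergenceF_of_inflow_eq_zero {Q : V × V → ℝ} (hQ : ∀ e, 0 ≤ Q e) {s : V}
    (hin : ∀ u, Q (u, s) = 0) (v : V) : Q (s, v) ≤ divergenceF Q s := by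
  rw [divergenceF, sum_eq_zero fun u _ => hin u, sub_zero]
  exact single_le_sum (fun y _ => hQ (s, y)) (mem_univ v)

theorem exists_isCouplingF_self [DecidableEq V] {μ : V → ℝ} (hμ : ∀ x, 0 ≤ μ x) :
    ∃ ρ, IsCouplingF μ μ ρ ∧ ∀ p, ρ p ≠ 0 → p.1 = p.2 := by
  refine ⟨fun p => if p.1 = p.2 then μ p.1 else 0, ⟨fun p => ?_, fun x => ?_, fun y => ?_⟩,
    fun p hp => ?_⟩
  · dsimp only
    split_ifs
    exacts [hμ _, le_rfl]
  · simp
  · simp only [sum_ite_eq', mem_univ, if_true]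
  · by_contra h
    simp [h] at hp

theorem divergenceF_update_zero [DecidableEq V] (Q : V × V → ℝ) (s v x : V) :
    divergenceF (Function.update Q (s, v) 0) x = divergenceF Q x -
      ((Pi.single s (Q (s, v)) : V → ℝ) x - (Pi.single v (Q (s, v)) : V → ℝ) x) := by
  rw [Pi.update_eq_sub_add_single, Pi.single_zero, add_zero, divergenceF_sub, divergenceF_single]

theorem card_pos_update_zero_lt [DecidableEq V] {Q : V × V → ℝ} {e₀ : V × V} (he₀ : 0 < Q e₀) :
    #{e | 0 < Function.update Q e₀ 0 e} < #{e | 0 < Q e} := by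
  refine card_lt_card ⟨monotone_filter_right _ fun e _ h => h.trans_le
    (update_le_self_iff.2 he₀.le e), fun hsub => ?_⟩
  have := (mem_filter.1 (hsub (mem_filter.2 ⟨mem_univ _, he₀⟩))).2
  simp at this

theorem IsCouplingF.exists_of_shift_fst [DecidableEq V] {μ₁ μ₂ : V → ℝ} {ρ' : V × V → ℝ}
    {s v : V} {q : ℝ} (hsv : s ≠ v) (hq : 0 ≤ q) (hv : 0 ≤ μ₁ v)
    (hρ' : IsCouplingF (μ₁ - Pi.single s q + Pi.single v q) μ₂ ρ') :
    ∃ ρ, IsCouplingF μ₁ μ₂ ρ ∧ ∀ p, ρ p ≠ 0 → ρ' p ≠ 0 ∨ (p.1 = s ∧ ρ' (v, p.2) ≠ 0) := by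
  obtain ⟨h0, hrow, hcol⟩ := hρ'
  -- row `v` of `ρ'` has mass `μ₁ v + q`, of which the fraction `θ` goes back to row `s`
  set θ := q / (μ₁ v + q)
  have hθ0 : 0 ≤ θ := by positivity
  have hθ1 : θ ≤ 1 := div_le_one_of_le₀ (by linarith) (by linarith)
  have hmass : θ * (μ₁ v + q) = q := by
    rcases (add_nonneg hv hq).eq_or_lt with h | h
    · have hq0 : q = 0 := by linarith
      simp [θ, hq0]
    · exact div_mul_cancel₀ q h.ne'
  have hrow_v : ∑ y, ρ' (v, y) = μ₁ v + q := by
    simp [hrow v, hsv.symm]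
  refine ⟨fun p => ρ' p + (if p.1 = s then θ * ρ' (v, p.2) else 0) -
    (if p.1 = v then θ * ρ' (v, p.2) else 0), ⟨?_, fun x => ?_, fun y => ?_⟩, ?_⟩
  · rintro ⟨x, y⟩
    dsimp only
    have := mul_nonneg hθ0 (h0 (v, y))
    split_ifs with hxs hxv hxv
    · exact absurd (hxs.symm.trans hxv) hsv
    · linarith [h0 (x, y)]
    · subst hxv
      nlinarith [h0 (x, y)]
    · linarith [h0 (x, y)]
  · dsimp only
    rw [sum_sub_distrib, sum_add_distrib, hrow x]
    split_ifs with hxs hxv hxv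
    · exact absurd (hxs.symm.trans hxv) hsv
    · subst hxs
      simp [← mul_sum, hrow_v, hmass, hsv]
    · subst hxv
      simp [← mul_sum, hrow_v, hmass, hxs]
    · simp [hxs, hxv]
  · rw [sum_sub_distrib, sum_add_distrib, sum_ite_eq', sum_ite_eq', hcol]
    simp
  · rintro ⟨x, y⟩ hp
    by_contra! h
    obtain ⟨hρ'0, hs0⟩ := h
    apply hp
    dsimp only at hs0 ⊢
    by_cases hxs : x = s
    · subst hxs
      simp [hsv, hρ'0, hs0 rfl]
    · by_cases hxv : x = v
      · subst hxv
        simp [hxs, hρ'0]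
      · simp [hxs, hxv, hρ'0]

theorem exists_isCouplingF_reflTransGen_of_divergenceF {Q : V × V → ℝ} (hQ : ∀ e, 0 ≤ Q e)
    (hacyc : AcyclicRel fun a b => 0 < Q (a, b)) {μ₁ μ₂ : V → ℝ} (hμ₁ : ∀ x, 0 ≤ μ₁ x)
    (hμ₂ : ∀ x, 0 ≤ μ₂ x) (hdiv : ∀ x, divergenceF Q x = μ₁ x - μ₂ x) :
    ∃ ρ, IsCouplingF μ₁ μ₂ ρ ∧
      ∀ p, ρ p ≠ 0 → Relation.ReflTransGen (fun a b => 0 < Q (a, b)) p.1 p.2 := by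
  classical
  induction hn : #{e | 0 < Q e} using Nat.strong_induction_on generalizing Q μ₁ with
  | _ n ih =>
  by_cases hpos : ∃ e, 0 < Q e
  swap
  · push Not at hpos
    have hQ0 : Q = 0 := funext fun e => le_antisymm (hpos e) (hQ e)
    obtain rfl : μ₁ = μ₂ := funext fun x => by
      have := hdiv x
      simp only [hQ0, divergenceF, Pi.zero_apply, sum_const_zero, sub_zero] at this
      linarith
    obtain ⟨ρ, hρ, hdiag⟩ := exists_isCouplingF_self hμ₁
    exact ⟨ρ, hρ, fun p hp => hdiag p hp ▸ .refl⟩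
  obtain ⟨⟨a, b⟩, hab⟩ := hpos
  obtain ⟨s, v, hsv, hsrc⟩ := hacyc.exists_source hab
  have hne : s ≠ v := by
    rintro rfl
    exact hacyc s (.single hsv)
  set Q' := Function.update Q (s, v) 0
  have hQ'_nonneg : 0 ≤ Q' := le_update_iff.2 ⟨le_rfl, fun e _ => hQ e⟩
  have hmono : ∀ a b, 0 < Q' (a, b) → 0 < Q (a, b) :=
    fun a b h => h.trans_le (update_le_self_iff.2 (hQ _) _)
  have hacyc' : AcyclicRel fun a b => 0 < Q' (a, b) :=
    fun x hx => hacyc x (Relation.TransGen.mono hmono _ _ hx)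
  have hq : 0 ≤ Q (s, v) := hQ _
  have hout : Q (s, v) ≤ μ₁ s - μ₂ s := hdiv s ▸
    apply_le_divergenceF_of_inflow_eq_zero hQ (fun u => le_antisymm (not_lt.1 (hsrc u)) (hQ _)) v
  set μ₁' := μ₁ - Pi.single s (Q (s, v)) + Pi.single v (Q (s, v))
  have hμ₁' : ∀ x, 0 ≤ μ₁' x := fun x => by
    simp only [μ₁', Pi.add_apply, Pi.sub_apply, Pi.single_apply]
    split_ifs <;> subst_vars <;> linarith [hμ₁ x, hμ₂ x]
  have hdiv' : ∀ x, divergenceF Q' x = μ₁' x - μ₂ x := fun x => by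
    rw [divergenceF_update_zero, hdiv]
    simp only [μ₁', Pi.add_apply, Pi.sub_apply]
    ring
  obtain ⟨ρ', hρ', hcomp'⟩ :=
    ih _ (hn ▸ card_pos_update_zero_lt hsv) hQ'_nonneg hacyc' hμ₁' hdiv' rfl
  obtain ⟨ρ, hρ, hcomp⟩ := hρ'.exists_of_shift_fst hne hq (hμ₁ v)
  refine ⟨ρ, hρ, fun p hp => ?_⟩
  rcases hcomp p hp with h | ⟨hps, h⟩
  · exact Relation.ReflTransGen.mono hmono _ _ (hcomp' p h)
  · rw [hps]
    exact .head hsv (Relation.ReflTransGen.mono hmono _ _ (hcomp' _ h))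

end Finite

theorem acyclic_flow_gives_compatible_coupling_general {V : Type*} [Fintype V]
    (E : Set (V × V))
    (Q : V × V → ℝ) (hQ : IsFlow E Q)
    (hacyc : AcyclicRel fun a b => 0 < Q (a, b))
    (μ₁ μ₂ : V → ℝ) (h₁ : IsProbF μ₁) (h₂ : IsProbF μ₂)
    (hdiv : ∀ x, divergenceF Q x = μ₁ x - μ₂ x) :
    ∃ ρ : V × V → ℝ, IsCouplingF μ₁ μ₂ ρ ∧
      ∀ p : V × V, ρ p ≠ 0 → inducedLE {e : V × V | 0 < Q e} p.1 p.2 :=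
  exists_isCouplingF_reflTransGen_of_divergenceF hQ.1 hacyc h₁.1 h₂.1 hdiv

/-- **From an acyclic flow to a compatible coupling, finite case.**
Given a finite digraph and an acyclic flow `Q` with `div Q = μ₁ - μ₂`, there is a coupling
of `μ₁` and `μ₂` compatible with the partial order induced by `(V, E(Q))`: `ρ(x,y) ≠ 0`
implies `x = y` or there is a directed path from `x` to `y` along edges with `Q > 0`. -/
theorem acyclic_flow_gives_compatible_coupling {V : Type*} [Fintype V]
    (E : Set (V × V)) (hloop : ∀ x : V, (x, x) ∉ E)
    (Q : V × V → ℝ) (hQ : IsFlow E Q)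
    (hacyc : AcyclicRel fun a b => 0 < Q (a, b))
    (μ₁ μ₂ : V → ℝ) (h₁ : IsProbF μ₁) (h₂ : IsProbF μ₂)
    (hdiv : ∀ x, divergenceF Q x = μ₁ x - μ₂ x) :
    ∃ ρ : V × V → ℝ, IsCouplingF μ₁ μ₂ ρ ∧
      ∀ p : V × V, ρ p ≠ 0 → inducedLE {e : V × V | 0 < Q e} p.1 p.2 :=
  acyclic_flow_gives_compatible_coupling_general E Q hQ hacyc μ₁ μ₂ h₁ h₂ hdiv
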